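/- Let b∈A and ψ₁,ψ₂,ψ₃∈F with |ψ₃|≥1, and fix a choice of sign ±. Then the following identities hold in U(sl₂⊗A): (i) ψ₂(b)·D^±(ψ₁,ψ₂,ψ₃) = Σ_{φ₁∈F(ψ₁)}Σ_{φ₂∈F(ψ₂)}Σ_{c∈supp ψ₃} φ₂(b)·D^±(φ₁,φ₂,χ_c)·D^±(ψ₁−φ₁,ψ₂−φ₂,ψ₃−χ_c); and (ii) (|ψ₂|+|ψ₃|)·D^±(ψ₁,ψ₂,ψ₃) = Σ_{φ₁∈F(ψ₁)}Σ_{φ₂∈F(ψ₂)}Σ_{c∈supp ψ₃} (|φ₁|+1)·D^±(φ₁,φ₂,χ_c)·D^±(ψ₁−φ₁,ψ₂−φ₂,ψ₃−χ_c). -/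

import Mathlib

/-!
Both identities are instances of one: for an additive weight `W` on triples,
`W(ψ) D(ψ) = Σ W(φ₁, φ₂, χ_c) D(φ₁, φ₂, χ_c) D(ψ - (φ₁, φ₂, χ_c))`, namely with `W = ψ₂(b)` and
`W = |ψ₂| + |ψ₃|` (which equals `|φ₁| + 1` on the steps where `D(φ₁, φ₂, χ_c) ≠ 0`).
Multiplying by `|ψ₃|` and using the recursion together with `W(ψ) = W(step) + W(rest)` splits
`|ψ₃| W(ψ) D(ψ)` into the right-hand side `T` plus `Σ D(step) W(rest) D(rest)`. By induction the
latter is a double sum over two successive steps; as the values of `D` on steps commute, it is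
symmetric in the two steps, and the recursion collapses it to `(|ψ₃| - 1) T`.
-/

open scoped TensorProduct
open Finsupp
open scoped Classical

noncomputable section

namespace MapAlgebra

/-- the divided power `u^{(r)} = u^r / r!` in a `ℂ`-algebra. -/
def dp {S : Type*} [Ring S] [Algebra ℂ S] (u : S) (r : ℕ) : S :=
  (r.factorial : ℂ)⁻¹ • u ^ r

variable {A : Type*} [CommRing A] [Algebra ℂ A]

/-- `|ψ| = Σ_a ψ(a)` for a multiset `ψ` of elements of `A`. -/
def wt (ψ : A →₀ ℕ) : ℕ := ψ.sum fun _ n => n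

/-- `π(ψ) = ∏_a a^{ψ(a)}`. -/
def piF (ψ : A →₀ ℕ) : A := ψ.prod fun a n => a ^ n

/-- `m(ψ) = |ψ|! / ∏_a ψ(a)!`. -/
def mF (ψ : A →₀ ℕ) : ℕ := Finsupp.multinomial ψ

variable {L : Type*} [LieRing L] [LieAlgebra ℂ L]

instance : LieAlgebra ℂ (A ⊗[ℂ] L) where
  lie_smul c x y := by
    rw [← algebraMap_smul A c y, lie_smul, algebraMap_smul]

/-- The universal enveloping algebra `U(L ⊗ A)` of the map algebra `L ⊗ A`
(realized as `A ⊗[ℂ] L` with bracket `[a ⊗ z, b ⊗ z'] = ab ⊗ [z,z']`). -/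
abbrev UEA (A : Type*) [CommRing A] [Algebra ℂ A]
    (L : Type*) [LieRing L] [LieAlgebra ℂ L] : Type _ :=
  UniversalEnvelopingAlgebra ℂ (A ⊗[ℂ] L)

/-- The element `v ⊗ a` of the map algebra, viewed inside `U(L ⊗ A)`. -/
def el (a : A) (v : L) : UEA A L :=
  UniversalEnvelopingAlgebra.ι ℂ (a ⊗ₜ[ℂ] v)

lemma commute_el (a b : A) (v : L) : Commute (el a v : UEA A L) (el b v) := by
  letI : LieRing (UEA A L) := LieRing.ofAssociativeRing
  have h := (UniversalEnvelopingAlgebra.ι ℂ).map_lie (a ⊗ₜ[ℂ] v) (b ⊗ₜ[ℂ] v)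
  rw [LieAlgebra.ExtendScalars.bracket_tmul, lie_self, TensorProduct.tmul_zero, map_zero,
    Ring.lie_def] at h
  exact (sub_eq_zero.mp h.symm)

lemma commute_dp {S : Type*} [Ring S] [Algebra ℂ S] {u w : S} (h : Commute u w)
    (r s : ℕ) : Commute (dp u r) (dp w s) :=
  ((h.pow_pow r s).smul_left _).smul_right _

/-- `x^±(ψ) = ∏_a (x^± ⊗ a)^{(ψ(a))}` (generic in the element `v` of `L`);
the factors pairwise commute, so the product is unambiguous. -/
def xProd (v : L) (ψ : A →₀ ℕ) : UEA A L :=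
  ψ.support.noncommProd (fun a => dp (el a v) (ψ a))
    (fun a _ b _ _ => commute_dp (commute_el a b v) _ _)

/-- the predicate characterizing the recursively defined family
`p : F × F → U(L ⊗ A)` (relative to a choice `v` playing the role of `h`). -/
def IsP (v : L) (p : (A →₀ ℕ) → (A →₀ ℕ) → UEA A L) : Prop :=
  p 0 0 = 1 ∧
  (∀ φ χ, wt φ ≠ wt χ → p φ χ = 0) ∧
  (∀ φ χ, φ ≠ 0 → χ ≠ 0 → wt φ = wt χ →
    p φ χ = -((wt φ : ℂ)⁻¹) •
      ∑ ψ₁ ∈ (Finset.Iic φ).erase 0, ∑ ψ₂ ∈ (Finset.Iic χ).erase 0,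
        ((mF ψ₁ * mF ψ₂ : ℕ) : ℂ) • (el (piF ψ₁ * piF ψ₂) v * p (φ - ψ₁) (χ - ψ₂)))

/-- `p(χ) = p(χ, |χ|·χ₁)`. -/
def pOne (p : (A →₀ ℕ) → (A →₀ ℕ) → UEA A L) (χ : A →₀ ℕ) : UEA A L :=
  p χ (Finsupp.single (1 : A) (wt χ))

/-- the predicate characterizing the recursively defined family
`D^± : F³ → U(L ⊗ A)` (relative to a choice `v` playing the role of `x^±`). -/
def IsD (v : L) (D : (A →₀ ℕ) → (A →₀ ℕ) → (A →₀ ℕ) → UEA A L) : Prop :=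
  (D 0 0 0 = 1) ∧
  (∀ ψ₁ ψ₂ : A →₀ ℕ, ¬(ψ₁ = 0 ∧ ψ₂ = 0) → D ψ₁ ψ₂ 0 = 0) ∧
  (∀ (ψ₁ ψ₂ : A →₀ ℕ) (b : A), D ψ₁ ψ₂ (Finsupp.single b 1) =
      if wt ψ₁ = wt ψ₂ then ((mF ψ₁ * mF ψ₂ : ℕ) : ℂ) • el (b * (piF ψ₁ * piF ψ₂)) v
      else 0) ∧
  (∀ ψ₁ ψ₂ ψ₃ : A →₀ ℕ, 2 ≤ wt ψ₃ →
    D ψ₁ ψ₂ ψ₃ = (wt ψ₃ : ℂ)⁻¹ •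
      ∑ φ₁ ∈ Finset.Iic ψ₁, ∑ φ₂ ∈ Finset.Iic ψ₂, ∑ b ∈ ψ₃.support,
        D φ₁ φ₂ (Finsupp.single b 1) *
          D (ψ₁ - φ₁) (ψ₂ - φ₂) (ψ₃ - Finsupp.single b 1))

/-- `𝔻(ψ₁,ψ₂,ψ₃) = Σ_{φ₁≤ψ₁} Σ_{φ₂≤ψ₂} p(φ₁,φ₂) D⁺(ψ₁−φ₁,ψ₂−φ₂,ψ₃)`. -/
def DD (p : (A →₀ ℕ) → (A →₀ ℕ) → UEA A L)
    (Dp : (A →₀ ℕ) → (A →₀ ℕ) → (A →₀ ℕ) → UEA A L)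
    (ψ₁ ψ₂ ψ₃ : A →₀ ℕ) : UEA A L :=
  ∑ φ₁ ∈ Finset.Iic ψ₁, ∑ φ₂ ∈ Finset.Iic ψ₂,
    p φ₁ φ₂ * Dp (ψ₁ - φ₁) (ψ₂ - φ₂) ψ₃

/-- the Lie algebra `sl₂` presented by a basis `x⁻ = b 0`, `h = b 1`, `x⁺ = b 2`
with `[h,x^±] = ±2x^±`, `[x⁺,x⁻] = h`. -/
structure Sl2Data (L : Type*) [LieRing L] [LieAlgebra ℂ L] where
  b : Module.Basis (Fin 3) ℂ L
  lie_h_xp : ⁅b 1, b 2⁆ = (2 : ℂ) • b 2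
  lie_h_xm : ⁅b 1, b 0⁆ = (-2 : ℂ) • b 0
  lie_xp_xm : ⁅b 2, b 0⁆ = b 1

/-- `x⁻`. -/
def Sl2Data.xm (S : Sl2Data L) : L := S.b 0
/-- `h`. -/
def Sl2Data.h (S : Sl2Data L) : L := S.b 1
/-- `x⁺`. -/
def Sl2Data.xp (S : Sl2Data L) : L := S.b 2

/-- The data of a root system and Chevalley basis for a (finite-dimensional simple)
complex Lie algebra `g`: a Cartan subalgebra `H`, the roots `R`, the positive roots
`Rpos` enumerated as `β 0, …, β (m-1)`, simple roots `α 0, …, α (n-1)`, root vectors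
`x s γ` (`s = true` for `x_γ⁺`, `s = false` for `x_γ⁻`), coroots, integral Cartan
pairing, and structure constants `±(p+1)`. -/
structure ChevalleyData (g : Type*) [LieRing g] [LieAlgebra ℂ g] where
  n : ℕ
  m : ℕ
  H : LieSubalgebra ℂ g
  cartan : H.IsCartanSubalgebra
  R : Set (Module.Dual ℂ H)
  Rpos : Set (Module.Dual ℂ H)
  β : Fin m → Module.Dual ℂ H
  β_inj : Function.Injective β
  Rpos_eq : Rpos = Set.range β
  α : Fin n → Module.Dual ℂ H
  α_mem : ∀ i, α i ∈ Rpos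
  R_eq : R = Rpos ∪ (fun γ => -γ) '' Rpos
  x : Bool → Module.Dual ℂ H → g
  coroot : Module.Dual ℂ H → H
  chevBasis : Module.Basis ((Fin m × Bool) ⊕ Fin n) ℂ g
  chevBasis_x : ∀ (k : Fin m) (s : Bool), chevBasis (Sum.inl (k, s)) = x s (β k)
  chevBasis_h : ∀ i : Fin n, chevBasis (Sum.inr i) = (coroot (α i) : g)
  rootvec_pos : ∀ γ ∈ Rpos, ∀ t : H, ⁅(t : g), x true γ⁆ = γ t • x true γ
  rootvec_neg : ∀ γ ∈ Rpos, ∀ t : H, ⁅(t : g), x false γ⁆ = -(γ t) • x false γ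
  coroot_def : ∀ γ ∈ Rpos, ⁅x true γ, x false γ⁆ = (coroot γ : g)
  pairing : Module.Dual ℂ H → Module.Dual ℂ H → ℤ
  pairing_eq : ∀ γ ∈ Rpos, ∀ δ ∈ R, δ (coroot γ) = (pairing γ δ : ℂ)
  pairing_self : ∀ γ ∈ Rpos, pairing γ γ = 2
  struct : ∀ γ δ, γ ∈ Rpos → δ ∈ Rpos → γ + δ ∈ R → ∃ (c : ℤ) (pm : ℕ),
    (δ - (pm : ℤ) • γ ∈ R) ∧ (∀ q : ℕ, δ - (q : ℤ) • γ ∈ R → q ≤ pm) ∧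
    (c = pm + 1 ∨ c = -(pm + 1)) ∧
    ⁅x true γ, x true δ⁆ = (c : ℂ) • x true (γ + δ) ∧
    ⁅x false γ, x false δ⁆ = (-c : ℂ) • x false (γ + δ)

/-- `ψ ∈ F(𝔹)`: the multiset `ψ` is supported on the basis `𝔹 = range bA` of `A`. -/
def SuppB {ιA : Type*} (bA : Module.Basis ιA ℂ A) (ψ : A →₀ ℕ) : Prop :=
  ∀ a ∈ ψ.support, a ∈ Set.range bA

variable {g : Type*} [LieRing g] [LieAlgebra ℂ g]

/-- The integral form `U_ℤ(g ⊗ A)`: the `ℤ`-subalgebra of `U(g ⊗ A)` generated by all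
divided powers `(x_α^± ⊗ b)^{(r)}`, `α ∈ R⁺`, `b ∈ 𝔹`, `r ∈ ℕ`. -/
def UZ (C : ChevalleyData g) {ιA : Type*} (bA : Module.Basis ιA ℂ A) : Subalgebra ℤ (UEA A g) :=
  Algebra.adjoin ℤ {u : UEA A g | ∃ (k : Fin C.m) (s : Bool) (i : ιA) (r : ℕ),
    u = dp (el (bA i) (C.x s (C.β k))) r}

/-- `U_ℤ^±(g ⊗ A)` (one sign `s` only). -/
def UZpm (C : ChevalleyData g) {ιA : Type*} (bA : Module.Basis ιA ℂ A) (s : Bool) :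
    Subalgebra ℤ (UEA A g) :=
  Algebra.adjoin ℤ {u : UEA A g | ∃ (k : Fin C.m) (i : ιA) (r : ℕ),
    u = dp (el (bA i) (C.x s (C.β k))) r}


/-- generalized binomial coefficient `C(z,k) = z(z-1)⋯(z-k+1)/k!` (as a complex scalar). -/
def cchoose (z : ℂ) (k : ℕ) : ℂ :=
  (k.factorial : ℂ)⁻¹ * ∏ j ∈ Finset.range k, (z - (j : ℂ))

/-- the (finite) set `P_k(ψ)` of partitions of `ψ` into `k` parts,
i.e. finitely supported `χ : F → ℕ` with `Σ_φ χ(φ)·φ = ψ` and `Σ_φ χ(φ) = k`. -/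
def partitions (ψ : A →₀ ℕ) (k : ℕ) : Finset ((A →₀ ℕ) →₀ ℕ) :=
  (Finset.Iic ((Finset.Iic ψ).sum fun φ => Finsupp.single φ k)).filter
    (fun χ => (χ.sum fun φ c => c • φ) = ψ ∧ (χ.sum fun _ c => c) = k)

/-- the (finite) set `S_k(χ)` of finitely supported `ψ : F → ℕ` with
`Σ_φ ψ(φ)·φ ≤ χ` and `Σ_φ ψ(φ) = k`. -/
def subPartitions (χ : A →₀ ℕ) (k : ℕ) : Finset ((A →₀ ℕ) →₀ ℕ) :=
  (Finset.Iic ((Finset.Iic χ).sum fun φ => Finsupp.single φ k)).filter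
    (fun ψ => (ψ.sum fun φ c => c • φ) ≤ χ ∧ (ψ.sum fun _ c => c) = k)

/-- `U_ℤ^0(g ⊗ A)`: the `ℤ`-subalgebra generated by the `p_i(χ)`, `χ ∈ F(𝔹)`,
where `P i` is the family `p_i` (defined by recursion relative to `h_{α_i}`). -/
def UZ0 (C : ChevalleyData g) {ιA : Type*} (bA : Module.Basis ιA ℂ A)
    (P : Fin C.n → (A →₀ ℕ) → (A →₀ ℕ) → UEA A g) : Subalgebra ℤ (UEA A g) :=
  Algebra.adjoin ℤ {u : UEA A g | ∃ (i : Fin C.n) (χ : A →₀ ℕ), SuppB bA χ ∧ u = pOne (P i) χ}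

section StepRecursion

variable {M R : Type*} [AddCommMonoid M] [PartialOrder M] [Sub M] [Semiring R]

/-- The shape of the recursion defining `D^±`: for `x = (ψ₁, ψ₂, ψ₃)`, `deg x = |ψ₃|` and the steps
are the triples `(φ₁, φ₂, χ_c) ≤ x`. -/
structure IsStepRecursion (steps : M → Finset M) (deg : M →+ ℕ) (D : M → R) : Prop where
  mem_steps {x s : M} : s ∈ steps x ↔ s ≤ x ∧ deg s = 1
  commute {s t : M} : deg s = 1 → deg t = 1 → Commute (D s) (D t)
  nsmul_eq_sum (x : M) : deg x • D x = ∑ s ∈ steps x, D s * D (x - s)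
  eq_zero {x : M} : deg x = 0 → x ≠ 0 → D x = 0

namespace IsStepRecursion

variable [CanonicallyOrderedAdd M] [OrderedSub M] {steps : M → Finset M} {deg : M →+ ℕ}
  {D : M → R}

lemma deg_tsub_add_one (h : IsStepRecursion steps deg D) {x s : M} (hs : s ∈ steps x) :
    deg (x - s) + 1 = deg x := by
  obtain ⟨hsx, hdeg⟩ := h.mem_steps.1 hs
  rw [← hdeg, ← map_add, tsub_add_cancel_of_le hsx]

lemma steps_eq_empty (h : IsStepRecursion steps deg D) {x : M} (hx : deg x = 0) :
    steps x = ∅ :=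
  Finset.eq_empty_of_forall_notMem fun s hs => by
    have := h.deg_tsub_add_one hs
    omega

lemma mem_steps_tsub [AddLeftReflectLE M] (h : IsStepRecursion steps deg D) {x s t : M} :
    s ∈ steps x ∧ t ∈ steps (x - s) ↔ s + t ≤ x ∧ deg s = 1 ∧ deg t = 1 := by
  simp only [h.mem_steps]
  refine ⟨fun ⟨⟨hs, hs1⟩, ht, ht1⟩ => ⟨add_le_of_le_tsub_left_of_le hs ht, hs1, ht1⟩,
    fun ⟨hst, hs1, ht1⟩ => ⟨⟨le_self_add.trans hst, hs1⟩, le_tsub_of_add_le_left hst, ht1⟩⟩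

lemma sum_steps_sum_steps_tsub_comm [AddLeftReflectLE M] {β : Type*} [AddCommMonoid β]
    (h : IsStepRecursion steps deg D) (x : M) (f : M → M → β) :
    ∑ s ∈ steps x, ∑ t ∈ steps (x - s), f s t = ∑ s ∈ steps x, ∑ t ∈ steps (x - s), f t s :=
  Finset.sum_comm' fun s t => by
    rw [h.mem_steps_tsub, and_comm (a := s ∈ steps (x - t)), h.mem_steps_tsub, add_comm]
    tauto

lemma sum_mul_nsmul_tsub [AddLeftReflectLE M] (h : IsStepRecursion steps deg D) (W : M →+ ℕ)
    {x : M} {n : ℕ} (hx : deg x = n + 1)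
    (ih : ∀ s ∈ steps x, W (x - s) • D (x - s) =
      ∑ t ∈ steps (x - s), W t • (D t * D (x - s - t))) :
    ∑ s ∈ steps x, D s * (W (x - s) • D (x - s)) =
      n • ∑ s ∈ steps x, W s • (D s * D (x - s)) := by
  have hdeg : ∀ s ∈ steps x, deg (x - s) = n := fun s hs => by
    have := h.deg_tsub_add_one hs
    omega
  calc ∑ s ∈ steps x, D s * (W (x - s) • D (x - s))
      = ∑ s ∈ steps x, ∑ t ∈ steps (x - s), W t • (D s * D t * D (x - s - t)) := by
        refine Finset.sum_congr rfl fun s hs => ?_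
        simp only [ih s hs, Finset.mul_sum, mul_smul_comm, mul_assoc]
    _ = ∑ s ∈ steps x, ∑ t ∈ steps (x - s), W s • (D t * D s * D (x - t - s)) :=
        h.sum_steps_sum_steps_tsub_comm x _
    _ = ∑ s ∈ steps x, ∑ t ∈ steps (x - s), W s • (D s * D t * D (x - s - t)) := by
        refine Finset.sum_congr rfl fun s hs => Finset.sum_congr rfl fun t ht => ?_
        obtain ⟨-, hs1, ht1⟩ := h.mem_steps_tsub.1 ⟨hs, ht⟩
        rw [(h.commute ht1 hs1).eq, tsub_right_comm]
    _ = ∑ s ∈ steps x, W s • (D s * (deg (x - s) • D (x - s))) := by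
        refine Finset.sum_congr rfl fun s _ => ?_
        simp only [h.nsmul_eq_sum, Finset.mul_sum, Finset.smul_sum, mul_assoc]
    _ = n • ∑ s ∈ steps x, W s • (D s * D (x - s)) := by
        rw [Finset.smul_sum]
        refine Finset.sum_congr rfl fun s hs => ?_
        rw [hdeg s hs, mul_smul_comm, smul_comm]

theorem nsmul_eq_sum_nsmul [AddLeftReflectLE M] [IsAddTorsionFree R]
    (h : IsStepRecursion steps deg D) (W : M →+ ℕ) (x : M) :
    W x • D x = ∑ s ∈ steps x, W s • (D s * D (x - s)) := by
  induction hn : deg x generalizing x with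
  | zero =>
    rw [h.steps_eq_empty hn, Finset.sum_empty]
    rcases eq_or_ne x 0 with rfl | hx
    · rw [map_zero, zero_smul]
    · rw [h.eq_zero hn hx, smul_zero]
  | succ n ih =>
    have ih' : ∀ s ∈ steps x, W (x - s) • D (x - s) =
        ∑ t ∈ steps (x - s), W t • (D t * D (x - s - t)) := fun s hs =>
      ih _ (by have := h.deg_tsub_add_one hs; omega)
    refine nsmul_right_injective (Nat.succ_ne_zero n) ?_
    calc (n + 1) • W x • D x = W x • (deg x • D x) := by rw [hn, smul_comm]
      _ = ∑ s ∈ steps x, W s • (D s * D (x - s)) +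
            ∑ s ∈ steps x, D s * (W (x - s) • D (x - s)) := by
        rw [h.nsmul_eq_sum, Finset.smul_sum, ← Finset.sum_add_distrib]
        refine Finset.sum_congr rfl fun s hs => ?_
        rw [← tsub_add_cancel_of_le (h.mem_steps.1 hs).1, map_add, add_tsub_cancel_right,
          add_comm, add_smul, mul_smul_comm]
      _ = (n + 1) • ∑ s ∈ steps x, W s • (D s * D (x - s)) := by
        rw [h.sum_mul_nsmul_tsub W hn ih', succ_nsmul']

end IsStepRecursion

end StepRecursion

section Triples

def wtThird {α : Type*} : (α →₀ ℕ) × (α →₀ ℕ) × (α →₀ ℕ) →+ ℕ :=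
  Finsupp.degree.comp ((AddMonoidHom.snd _ _).comp (AddMonoidHom.snd _ _))

def unitSteps {α : Type*} (x : (α →₀ ℕ) × (α →₀ ℕ) × (α →₀ ℕ)) :
    Finset ((α →₀ ℕ) × (α →₀ ℕ) × (α →₀ ℕ)) :=
  Finset.Iic x.1 ×ˢ Finset.Iic x.2.1 ×ˢ
    x.2.2.support.map ⟨fun c => Finsupp.single c 1, Finsupp.single_left_injective one_ne_zero⟩

lemma single_one_le_iff_mem_support {α : Type*} {c : α} {ψ : α →₀ ℕ} :
    Finsupp.single c 1 ≤ ψ ↔ c ∈ ψ.support := by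
  rw [Finsupp.single_le_iff, Nat.one_le_iff_ne_zero, Finsupp.mem_support_iff]

lemma degree_eq_one_iff {α : Type*} {χ : α →₀ ℕ} :
    χ.degree = 1 ↔ ∃ c, Finsupp.single c 1 = χ := by
  rw [← Set.mem_range, Finsupp.range_single_one, Set.mem_ofPred_eq]

lemma mem_unitSteps {α : Type*} {x s : (α →₀ ℕ) × (α →₀ ℕ) × (α →₀ ℕ)} :
    s ∈ unitSteps x ↔ s ≤ x ∧ wtThird s = 1 := by
  obtain ⟨φ₁, φ₂, χ⟩ := s
  simp only [unitSteps, wtThird, Finset.mem_product, Finset.mem_Iic, Finset.mem_map,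
    Function.Embedding.coeFn_mk, AddMonoidHom.coe_comp, Function.comp_apply,
    AddMonoidHom.coe_snd, degree_eq_one_iff]
  constructor
  · rintro ⟨h₁, h₂, c, hc, rfl⟩
    exact ⟨⟨h₁, h₂, single_one_le_iff_mem_support.2 hc⟩, c, rfl⟩
  · rintro ⟨⟨h₁, h₂, h₃⟩, c, rfl⟩
    exact ⟨h₁, h₂, c, single_one_le_iff_mem_support.1 h₃, rfl⟩

lemma sum_unitSteps {α β : Type*} [AddCommMonoid β] (x : (α →₀ ℕ) × (α →₀ ℕ) × (α →₀ ℕ))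
    (f : (α →₀ ℕ) × (α →₀ ℕ) × (α →₀ ℕ) → β) :
    ∑ s ∈ unitSteps x, f s = ∑ φ₁ ∈ Finset.Iic x.1, ∑ φ₂ ∈ Finset.Iic x.2.1,
      ∑ c ∈ x.2.2.support, f (φ₁, φ₂, Finsupp.single c 1) := by
  simp only [unitSteps, Finset.sum_product, Finset.sum_map, Function.Embedding.coeFn_mk]

end Triples

namespace IsD

variable {v : L} {D : (A →₀ ℕ) → (A →₀ ℕ) → (A →₀ ℕ) → UEA A L}

lemma apply_single_of_wt_ne (hD : IsD v D) {φ₁ φ₂ : A →₀ ℕ} (h : wt φ₁ ≠ wt φ₂) (c : A) :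
    D φ₁ φ₂ (Finsupp.single c 1) = 0 := by
  rw [hD.2.2.1, if_neg h]

lemma commute (hD : IsD v D) (φ₁ φ₂ φ₁' φ₂' : A →₀ ℕ) (c c' : A) :
    Commute (D φ₁ φ₂ (Finsupp.single c 1)) (D φ₁' φ₂' (Finsupp.single c' 1)) := by
  rw [hD.2.2.1, hD.2.2.1]
  split_ifs
  · exact ((commute_el _ _ v).smul_left _).smul_right _
  all_goals simp

lemma apply_tsub_tsub_zero (hD : IsD v D) {φ₁ φ₂ ψ₁ ψ₂ : A →₀ ℕ} (h₁ : φ₁ ≤ ψ₁)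
    (h₂ : φ₂ ≤ ψ₂) : D (ψ₁ - φ₁) (ψ₂ - φ₂) 0 = if φ₁ = ψ₁ ∧ φ₂ = ψ₂ then 1 else 0 := by
  have hψ : ∀ {φ ψ : A →₀ ℕ}, φ ≤ ψ → (ψ - φ = 0 ↔ φ = ψ) := fun h =>
    tsub_eq_zero_iff_le.trans ⟨fun h' => le_antisymm h h', ge_of_eq⟩
  split_ifs with hφ
  · rw [hφ.1, hφ.2, tsub_self, tsub_self, hD.1]
  · exact hD.2.1 _ _ (by rwa [hψ h₁, hψ h₂])

lemma sum_mul_apply_tsub_tsub_zero (hD : IsD v D) (ψ₁ ψ₂ : A →₀ ℕ)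
    (f : (A →₀ ℕ) → (A →₀ ℕ) → UEA A L) :
    ∑ φ₁ ∈ Finset.Iic ψ₁, ∑ φ₂ ∈ Finset.Iic ψ₂, f φ₁ φ₂ * D (ψ₁ - φ₁) (ψ₂ - φ₂) 0 =
      f ψ₁ ψ₂ := by
  rw [Finset.sum_eq_single_of_mem ψ₁ (Finset.mem_Iic.2 le_rfl),
    Finset.sum_eq_single_of_mem ψ₂ (Finset.mem_Iic.2 le_rfl),
    hD.apply_tsub_tsub_zero le_rfl le_rfl, if_pos ⟨rfl, rfl⟩, mul_one]
  · intro φ₂ h₂ hne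
    rw [hD.apply_tsub_tsub_zero le_rfl (Finset.mem_Iic.1 h₂), if_neg (by tauto), mul_zero]
  · intro φ₁ h₁ hne
    refine Finset.sum_eq_zero fun φ₂ h₂ => ?_
    rw [hD.apply_tsub_tsub_zero (Finset.mem_Iic.1 h₁) (Finset.mem_Iic.1 h₂), if_neg (by tauto),
      mul_zero]

lemma wt_smul_eq_sum (hD : IsD v D) (ψ₁ ψ₂ ψ₃ : A →₀ ℕ) :
    (wt ψ₃ : ℂ) • D ψ₁ ψ₂ ψ₃ =
      ∑ φ₁ ∈ Finset.Iic ψ₁, ∑ φ₂ ∈ Finset.Iic ψ₂, ∑ c ∈ ψ₃.support,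
        D φ₁ φ₂ (Finsupp.single c 1) * D (ψ₁ - φ₁) (ψ₂ - φ₂) (ψ₃ - Finsupp.single c 1) := by
  rcases Nat.lt_or_ge (wt ψ₃) 2 with h | h
  · obtain h₀ | h₁ : wt ψ₃ = 0 ∨ wt ψ₃ = 1 := by omega
    · obtain rfl : ψ₃ = 0 := Finsupp.degree_eq_zero_iff _ |>.1 h₀
      simp [wt]
    · obtain ⟨c, rfl⟩ := degree_eq_one_iff.1 h₁
      simp only [h₁, Nat.cast_one, one_smul, Finsupp.support_single c one_ne_zero,
        Finset.sum_singleton, tsub_self]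
      exact (hD.sum_mul_apply_tsub_tsub_zero ψ₁ ψ₂ fun φ₁ φ₂ => D φ₁ φ₂ _).symm
  · rw [hD.2.2.2 ψ₁ ψ₂ ψ₃ h, smul_smul, mul_inv_cancel₀ (by norm_cast; omega), one_smul]

theorem isStepRecursion (hD : IsD v D) :
    IsStepRecursion unitSteps wtThird (fun x => D x.1 x.2.1 x.2.2) where
  mem_steps := mem_unitSteps
  commute {s t} hs ht := by
    obtain ⟨φ₁, φ₂, χ⟩ := s
    obtain ⟨φ₁', φ₂', χ'⟩ := t
    obtain ⟨c, rfl⟩ := degree_eq_one_iff.1 hs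
    obtain ⟨c', rfl⟩ := degree_eq_one_iff.1 ht
    exact hD.commute φ₁ φ₂ φ₁' φ₂' c c'
  nsmul_eq_sum x := by
    rw [← Nat.cast_smul_eq_nsmul ℂ, sum_unitSteps]
    exact hD.wt_smul_eq_sum x.1 x.2.1 x.2.2
  eq_zero {x} hx hx0 := by
    obtain ⟨ψ₁, ψ₂, ψ₃⟩ := x
    obtain rfl : ψ₃ = 0 := (Finsupp.degree_eq_zero_iff _).1 hx
    exact hD.2.1 ψ₁ ψ₂ fun h => hx0 (by rw [h.1, h.2]; rfl)

theorem natCast_smul_eq_sum (hD : IsD v D) (W : (A →₀ ℕ) × (A →₀ ℕ) × (A →₀ ℕ) →+ ℕ)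
    (ψ₁ ψ₂ ψ₃ : A →₀ ℕ) :
    ((W (ψ₁, ψ₂, ψ₃) : ℕ) : ℂ) • D ψ₁ ψ₂ ψ₃ =
      ∑ φ₁ ∈ Finset.Iic ψ₁, ∑ φ₂ ∈ Finset.Iic ψ₂, ∑ c ∈ ψ₃.support,
        ((W (φ₁, φ₂, Finsupp.single c 1) : ℕ) : ℂ) •
          (D φ₁ φ₂ (Finsupp.single c 1) * D (ψ₁ - φ₁) (ψ₂ - φ₂) (ψ₃ - Finsupp.single c 1)) := by
  have := IsAddTorsionFree.of_isTorsionFree ℂ (UEA A L)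
  simpa only [Nat.cast_smul_eq_nsmul, sum_unitSteps, Prod.mk_sub_mk] using
    hD.isStepRecursion.nsmul_eq_sum_nsmul W (ψ₁, ψ₂, ψ₃)

end IsD

theorem D_identities_general (S : Sl2Data L) (sgn : Bool)
    (D : (A →₀ ℕ) → (A →₀ ℕ) → (A →₀ ℕ) → UEA A L)
    (hD : IsD (if sgn then S.xp else S.xm) D)
    (b : A) (ψ₁ ψ₂ ψ₃ : A →₀ ℕ) :
    (((ψ₂ b : ℕ) : ℂ) • D ψ₁ ψ₂ ψ₃ =
      ∑ φ₁ ∈ Finset.Iic ψ₁, ∑ φ₂ ∈ Finset.Iic ψ₂, ∑ c ∈ ψ₃.support,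
        ((φ₂ b : ℕ) : ℂ) •
          (D φ₁ φ₂ (Finsupp.single c 1) *
            D (ψ₁ - φ₁) (ψ₂ - φ₂) (ψ₃ - Finsupp.single c 1))) ∧
    (((wt ψ₂ + wt ψ₃ : ℕ) : ℂ) • D ψ₁ ψ₂ ψ₃ =
      ∑ φ₁ ∈ Finset.Iic ψ₁, ∑ φ₂ ∈ Finset.Iic ψ₂, ∑ c ∈ ψ₃.support,
        ((wt φ₁ + 1 : ℕ) : ℂ) •
          (D φ₁ φ₂ (Finsupp.single c 1) *
            D (ψ₁ - φ₁) (ψ₂ - φ₂) (ψ₃ - Finsupp.single c 1))) := by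
  let second : (A →₀ ℕ) × (A →₀ ℕ) × (A →₀ ℕ) →+ (A →₀ ℕ) :=
    (AddMonoidHom.fst _ _).comp (AddMonoidHom.snd _ _)
  let wtSecondThird : (A →₀ ℕ) × (A →₀ ℕ) × (A →₀ ℕ) →+ ℕ := Finsupp.degree.comp second + wtThird
  refine ⟨hD.natCast_smul_eq_sum ((Finsupp.applyAddHom b).comp second) ψ₁ ψ₂ ψ₃, ?_⟩
  rw [show wt ψ₂ + wt ψ₃ = wtSecondThird (ψ₁, ψ₂, ψ₃) from rfl, hD.natCast_smul_eq_sum]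
  refine Finset.sum_congr rfl fun φ₁ _ => Finset.sum_congr rfl fun φ₂ _ =>
    Finset.sum_congr rfl fun c _ => ?_
  by_cases h : wt φ₁ = wt φ₂
  · have hW : wtSecondThird (φ₁, φ₂, Finsupp.single c 1) = wt φ₁ + 1 := by
      change φ₂.degree + (Finsupp.single c 1).degree = wt φ₁ + 1
      rw [Finsupp.degree_single, h]
      rfl
    rw [hW]
  · simp [hD.apply_single_of_wt_ne h]

/-- two recombination identities for `D^±`. -/
theorem D_identities (S : Sl2Data L) (sgn : Bool)
    (D : (A →₀ ℕ) → (A →₀ ℕ) → (A →₀ ℕ) → UEA A L)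
    (hD : IsD (if sgn then S.xp else S.xm) D)
    (b : A) (ψ₁ ψ₂ ψ₃ : A →₀ ℕ) (h3 : 1 ≤ wt ψ₃) :
    (((ψ₂ b : ℕ) : ℂ) • D ψ₁ ψ₂ ψ₃ =
      ∑ φ₁ ∈ Finset.Iic ψ₁, ∑ φ₂ ∈ Finset.Iic ψ₂, ∑ c ∈ ψ₃.support,
        ((φ₂ b : ℕ) : ℂ) •
          (D φ₁ φ₂ (Finsupp.single c 1) *
            D (ψ₁ - φ₁) (ψ₂ - φ₂) (ψ₃ - Finsupp.single c 1))) ∧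
    (((wt ψ₂ + wt ψ₃ : ℕ) : ℂ) • D ψ₁ ψ₂ ψ₃ =
      ∑ φ₁ ∈ Finset.Iic ψ₁, ∑ φ₂ ∈ Finset.Iic ψ₂, ∑ c ∈ ψ₃.support,
        ((wt φ₁ + 1 : ℕ) : ℂ) •
          (D φ₁ φ₂ (Finsupp.single c 1) *
            D (ψ₁ - φ₁) (ψ₂ - φ₂) (ψ₃ - Finsupp.single c 1))) :=
  D_identities_general S sgn D hD b ψ₁ ψ₂ ψ₃

end MapAlgebra
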